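/- arXiv:2307.09444 — 4 statements merged into one kernel-verified Lean document; each statement's English description precedes it below -/
import Mathlib

section
/- Let G be a graph with chromatic number χ and let A be a subset of vertices of G. Then there exists a set A' with A ⊆ A' ⊆ A ∪ N(A) (where N(A) is the set of neighbors of A) and a proper coloring φ : A' → {1,...,χ-1} ∪ {-1} of the induced subgraph G[A'] such that every vertex of A is colored, and no vertex of V \ A' has a neighbor colored -1. -/
/-- **Hiding Lemma.** For a finite graph `G` with chromatic number `χ` and a vertex set `A`,
there is `A'` with `A ⊆ A' ⊆ A ∪ N(A)` and a proper coloring `φ` of `G[A']` with colors in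
`{1, …, χ-1} ∪ {-1}` such that no vertex outside `A'` has a neighbor colored `-1`. -/
theorem hiding_lemma {V : Type} [Fintype V] (G : SimpleGraph V) (χ : ℕ)
    (hχ : G.chromaticNumber = χ) (A : Set V) :
    ∃ (A' : Set V) (φ : V → ℤ),
      A ⊆ A' ∧
      A' ⊆ A ∪ {v | v ∉ A ∧ ∃ u ∈ A, G.Adj u v} ∧
      (∀ v ∈ A', φ v = -1 ∨ (1 ≤ φ v ∧ φ v ≤ (χ : ℤ) - 1)) ∧
      (∀ u ∈ A', ∀ v ∈ A', G.Adj u v → φ u ≠ φ v) ∧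
      (∀ v ∉ A', ∀ u ∈ A', G.Adj v u → φ u ≠ -1) := by
  have hcol : G.Colorable χ := by
    rw [← SimpleGraph.chromaticNumber_le_iff_colorable, hχ]
  obtain ⟨C⟩ := hcol
  set A' : Set V := A ∪ {v | v ∉ A ∧ ∃ u ∈ A, G.Adj u v ∧ (C u : ℕ) = 0} with hA'
  refine ⟨A', fun v => if (C v : ℕ) = 0 then -1 else ((C v : ℕ) : ℤ), fun v hv => Or.inl hv, ?_, ?_, ?_, ?_⟩
  · rintro v (hv | ⟨hv, u, hu, hadj, _⟩)
    · exact Or.inl hv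
    · exact Or.inr ⟨hv, u, hu, hadj⟩
  · intro v _
    by_cases h : (C v : ℕ) = 0
    · simp [h]
    · right
      simp only [if_neg h]
      constructor
      · exact_mod_cast Nat.one_le_iff_ne_zero.mpr h
      · have := (C v).isLt
        omega
  · intro u _ v _ hadj
    have hne : C u ≠ C v := C.valid hadj
    by_cases h1 : (C u : ℕ) = 0 <;> by_cases h2 : (C v : ℕ) = 0 <;>
      simp only [if_pos, if_neg, h1, h2, if_true, if_false] <;> intro h
    · exact hne (Fin.ext (h1.trans h2.symm))
    · have : (1:ℤ) ≤ ((C v : ℕ) : ℤ) := by exact_mod_cast Nat.one_le_iff_ne_zero.mpr h2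
      omega
    · have : (1:ℤ) ≤ ((C u : ℕ) : ℤ) := by exact_mod_cast Nat.one_le_iff_ne_zero.mpr h1
      omega
    · exact hne (Fin.ext (by exact_mod_cast h))
  · intro v hv u hu hadj h
    have hcu : (C u : ℕ) = 0 := by
      by_contra h0
      simp only [if_neg h0] at h
      have : (0:ℤ) ≤ ((C u : ℕ) : ℤ) := Int.natCast_nonneg _
      omega
    have hvA : v ∉ A := fun hvA => hv (Or.inl hvA)
    rcases hu with hu | ⟨huA, w, hw, hadjw, hcw⟩
    · exact hv (Or.inr ⟨hvA, u, hu, G.adj_symm hadj, hcu⟩)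
    · exact (C.valid hadjw) (Fin.ext (hcw.trans hcu.symm))
end

section
/- Let G be a finite graph that admits an (α, d)-network decomposition in which clusters of the same cluster color are pairwise at distance at least 4 in G. Suppose each cluster C with cluster color a < α is assigned a vertex set C' with C ⊆ C' ⊆ C ∪ N(C) and a proper coloring φ_C of G[C'] using colors from palette p_a ∪ {-1} such that no vertex outside C' is adjacent to a vertex colored -1 by φ_C; and each cluster C with cluster color α is assigned a proper coloring φ_C of G[C] from p_α ∪ {-1}. Assume the palettes p_1,...,p_α are pairwise disjoint and none contains -1. Then assigning each vertex v an arbitrary color from the set of colors it received, preferring a color different from -1 when one exists, yields a proper coloring of G. -/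
/-- Correctness of the hiding-trick coloring combination: given an `(α,d)`-network
decomposition in which same-colored clusters are at pairwise distance at least `4`,
per-cluster colorings as produced by the Hiding Lemma (for cluster colors `a < α`) resp.
plain proper colorings (for cluster color `α`), with pairwise disjoint palettes not
containing `-1`, any choice of a received color per vertex preferring colors `≠ -1`
is a proper coloring of `G`. -/
theorem hiding_trick_proper {V ι : Type} [Fintype V] (G : SimpleGraph V)
    (α : ℕ) (hα : 1 ≤ α) (cluster : V → ι) (μ : ι → ℕ)
    (hμrange : ∀ i : ι, μ i ∈ Finset.Icc 1 α)
    -- `μ` is a proper coloring of the cluster graph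
    (hμ : ∀ u v : V, G.Adj u v → cluster u ≠ cluster v → μ (cluster u) ≠ μ (cluster v))
    -- distinct clusters of the same cluster color are at distance at least 4
    (hfar : ∀ u v : V, cluster u ≠ cluster v → μ (cluster u) = μ (cluster v) →
      ∀ w : G.Walk u v, 4 ≤ w.length)
    -- pairwise disjoint palettes, none containing `-1`
    (p : ℕ → Set ℤ) (hpdisj : ∀ a b, a ≠ b → Disjoint (p a) (p b))
    (hp1 : ∀ a, (-1 : ℤ) ∉ p a)
    (C' : ι → Set V) (φ : ι → V → ℤ)
    -- `C ⊆ C' ⊆ C ∪ N(C)` for each cluster `C`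
    (hsub : ∀ i : ι, {v | cluster v = i} ⊆ C' i)
    (hsub' : ∀ i : ι, C' i ⊆ {v | cluster v = i} ∪
      {v | cluster v ≠ i ∧ ∃ u, cluster u = i ∧ G.Adj u v})
    -- clusters with the top cluster color are colored exactly on themselves
    (htop : ∀ i : ι, μ i = α → C' i = {v | cluster v = i})
    -- each `φ i` uses colors from `p (μ i) ∪ {-1}`
    (hpal : ∀ i : ι, ∀ v ∈ C' i, φ i v ∈ insert (-1 : ℤ) (p (μ i)))
    -- each `φ i` is a proper coloring of `G[C' i]`
    (hproper : ∀ i : ι, ∀ u ∈ C' i, ∀ v ∈ C' i, G.Adj u v → φ i u ≠ φ i v)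
    -- hiding property: for `μ i < α`, no vertex outside `C' i` is adjacent
    -- to a vertex colored `-1` by `φ i`
    (hhide : ∀ i : ι, μ i < α → ∀ v ∉ C' i, ∀ u ∈ C' i, G.Adj v u → φ i u ≠ -1)
    -- the combined coloring: each vertex takes one of its received colors …
    (c : V → ℤ) (hc : ∀ v : V, ∃ i : ι, v ∈ C' i ∧ c v = φ i v)
    -- … preferring a color different from `-1` when one exists
    (hpref : ∀ v : V, (∃ i : ι, v ∈ C' i ∧ φ i v ≠ -1) → c v ≠ -1) :
    ∀ u v : V, G.Adj u v → c u ≠ c v := by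
  intro u v hadj hceq
  obtain ⟨i, hui, hcu⟩ := hc u
  obtain ⟨j, hvj, hcv⟩ := hc v
  by_cases hm1 : c u = -1
  · have hv1 : c v = -1 := by rw [← hceq]; exact hm1
    have hall_u : ∀ k, u ∈ C' k → φ k u = -1 := by
      intro k hk
      by_contra h
      exact hpref u ⟨k, hk, h⟩ hm1
    have hall_v : ∀ k, v ∈ C' k → φ k v = -1 := by
      intro k hk
      by_contra h
      exact hpref v ⟨k, hk, h⟩ hv1
    have hua : u ∈ C' (cluster u) := hsub (cluster u) rfl
    have hvb : v ∈ C' (cluster v) := hsub (cluster v) rfl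
    by_cases hab : cluster u = cluster v
    · exact hproper (cluster u) u hua v (by rw [hab]; exact hvb) hadj
        (by rw [hall_u _ hua, hall_v _ (show v ∈ C' (cluster u) by rw [hab]; exact hvb)])
    · rcases lt_or_eq_of_le ((Finset.mem_Icc.mp (hμrange (cluster u))).2) with hlt | heq
      · by_cases hva : v ∈ C' (cluster u)
        · exact hproper (cluster u) u hua v hva hadj
            (by rw [hall_u _ hua, hall_v _ hva])
        · exact hhide (cluster u) hlt v hva u hua hadj.symm (hall_u _ hua)
      · rcases lt_or_eq_of_le ((Finset.mem_Icc.mp (hμrange (cluster v))).2) with hlt | heqb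
        · by_cases hub : u ∈ C' (cluster v)
          · exact hproper (cluster v) u hub v hvb hadj
              (by rw [hall_u _ hub, hall_v _ hvb])
          · exact hhide (cluster v) hlt u hub v hvb hadj (hall_v _ hvb)
        · have hw := hfar u v hab (heq.trans heqb.symm)
            (SimpleGraph.Walk.cons hadj SimpleGraph.Walk.nil)
          simp at hw
  · have hv1 : c v ≠ -1 := by rw [← hceq]; exact hm1
    have hφu : φ i u ≠ -1 := by rw [← hcu]; exact hm1
    have hφv : φ j v ≠ -1 := by rw [← hcv]; exact hv1
    have hpu : φ i u ∈ p (μ i) := by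
      rcases hpal i u hui with h | h
      · exact absurd h hφu
      · exact h
    have hpv : φ j v ∈ p (μ j) := by
      rcases hpal j v hvj with h | h
      · exact absurd h hφv
      · exact h
    have hμij : μ i = μ j := by
      by_contra h
      exact (Set.disjoint_left.mp (hpdisj _ _ h)) hpu (by rw [hcu.symm.trans (hceq.trans hcv)]; exact hpv)
    by_cases hij : i = j
    · subst hij
      exact hproper i u hui v hvj hadj (by rw [← hcu, ← hcv, hceq])
    · have key : ∀ (x : V) (k : ι), x ∈ C' k →
          ∃ x' : V, cluster x' = k ∧ ∃ w : G.Walk x' x, w.length ≤ 1 := by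
        intro x k hx
        rcases hsub' k hx with h | ⟨_, x', hx', hadj'⟩
        · exact ⟨x, h, SimpleGraph.Walk.nil, by simp⟩
        · exact ⟨x', hx', SimpleGraph.Walk.cons hadj' SimpleGraph.Walk.nil, by simp⟩
      obtain ⟨u', hu', wu, hwu⟩ := key u i hui
      obtain ⟨v', hv', wv, hwv⟩ := key v j hvj
      have hcl : cluster u' ≠ cluster v' := by rw [hu', hv']; exact hij
      have hw := hfar u' v' hcl (by rw [hu', hv']; exact hμij)
        (wu.append (SimpleGraph.Walk.cons hadj wv.reverse))
      simp [SimpleGraph.Walk.length_append] at hw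
      omega
end

section
/- Let W ≥ 3 be odd and H ≥ 2. Define the graph G_{W,H} as the quotient of the (W+1) × (H+1) grid graph on vertex set {0,...,W} × {0,...,H} (vertices adjacent iff Manhattan distance 1) by the identifications (i,0) ∼ (W-i, H) for 0 ≤ i ≤ W and (0,j) ∼ (W,j) for 0 ≤ j ≤ H. Then G_{W,H} is not 3-colorable, i.e., χ(G_{W,H}) ≥ 4. -/
/-- The `(W+1) × (H+1)` grid graph: vertices adjacent iff their Manhattan distance is `1`. -/
def gridGraph (W H : ℕ) : SimpleGraph (Fin (W + 1) × Fin (H + 1)) where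
  Adj a b := ((a.1.val : ℤ) - b.1.val).natAbs + ((a.2.val : ℤ) - b.2.val).natAbs = 1
  symm := by
    constructor
    intro a b h
    omega
  loopless := by
    constructor
    intro a h
    simp at h

/-- The boundary identifications `(i,0) ∼ (W-i,H)` and `(0,j) ∼ (W,j)` yielding the Klein
bottle. -/
def kbRel (W H : ℕ) : (Fin (W + 1) × Fin (H + 1)) → (Fin (W + 1) × Fin (H + 1)) → Prop :=
  fun x y =>
    (x.2.val = 0 ∧ y.2.val = H ∧ y.1.val = W - x.1.val) ∨
    (x.1.val = 0 ∧ y.1.val = W ∧ y.2.val = x.2.val)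

/-- The setoid generated by the Klein-bottle identifications. -/
def kbSetoid (W H : ℕ) : Setoid (Fin (W + 1) × Fin (H + 1)) :=
  Relation.EqvGen.setoid (kbRel W H)

/-- The Klein-bottle quadrangulation `G_{W,H}`: the quotient of the grid graph by the
identifications, with an edge between two classes iff some representatives are adjacent. -/
def kbGraph (W H : ℕ) : SimpleGraph (Quotient (kbSetoid W H)) where
  Adj a b := a ≠ b ∧ ∃ u v, Quotient.mk (kbSetoid W H) u = a ∧
    Quotient.mk (kbSetoid W H) v = b ∧ (gridGraph W H).Adj u v
  symm := ⟨fun _ _ ⟨hne, u, v, hu, hv, hadj⟩ => ⟨hne.symm, v, u, hv, hu, hadj.symm⟩⟩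
  loopless := ⟨fun _ h => h.1 rfl⟩

section Aux

variable (W H : ℕ)

/-- normal form of a vertex under the Klein-bottle identifications -/
def kbNF (x : Fin (W + 1) × Fin (H + 1)) : ℕ × ℕ :=
  let p : ℕ × ℕ := if x.2.val = H then (W - x.1.val, 0) else (x.1.val, x.2.val)
  if p.1 = W then (0, p.2) else p

lemma kbNF_rel (hH : 1 ≤ H) {x y : Fin (W + 1) × Fin (H + 1)}
    (h : kbRel W H x y) : kbNF W H x = kbNF W H y := by
  have hx1 := x.1.isLt
  have hx2 := x.2.isLt
  have hy1 := y.1.isLt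
  have hy2 := y.2.isLt
  unfold kbNF kbRel at *
  rcases h with ⟨h1, h2, h3⟩ | ⟨h1, h2, h3⟩ <;> simp only [] <;>
    split_ifs <;> simp_all <;> omega

lemma kbNF_eqvGen (hH : 1 ≤ H) {x y : Fin (W + 1) × Fin (H + 1)}
    (h : Relation.EqvGen (kbRel W H) x y) : kbNF W H x = kbNF W H y := by
  induction h with
  | rel a b hab => exact kbNF_rel W H hH hab
  | refl => rfl
  | symm a b _ ih => exact ih.symm
  | trans a b c _ _ ih1 ih2 => exact ih1.trans ih2

lemma kbNF_adj_ne (hW : 2 ≤ W) (hH : 2 ≤ H) {x y : Fin (W + 1) × Fin (H + 1)}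
    (h : (gridGraph W H).Adj x y) : kbNF W H x ≠ kbNF W H y := by
  have hx1 := x.1.isLt
  have hx2 := x.2.isLt
  have hy1 := y.1.isLt
  have hy2 := y.2.isLt
  unfold kbNF gridGraph at *
  simp only [] at h ⊢
  split_ifs <;> simp_all [Prod.ext_iff, -Fin.val_eq_zero_iff] <;> omega

end Aux

/-- weight of a directed edge in a 3-coloring -/
def kbF (a b : ZMod 3) : ℤ := if b = a + 1 then 1 else -1

lemma kbF_pm (a b : ZMod 3) : kbF a b = 1 ∨ kbF a b = -1 := by
  unfold kbF; split <;> simp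

lemma kbF_cast (a b : ZMod 3) (h : a ≠ b) : ((kbF a b : ℤ) : ZMod 3) = b - a := by
  revert h; revert a b; decide

lemma kbF_neg (a b : ZMod 3) (h : a ≠ b) : kbF b a = - kbF a b := by
  revert h; revert a b; decide


/-- For odd `W ≥ 3` and `H ≥ 2`, the Klein-bottle quadrangulation `G_{W,H}` is not
`3`-colorable, i.e. `χ(G_{W,H}) ≥ 4`. -/
theorem kbGraph_not_three_colorable (W H : ℕ) (hW : 3 ≤ W) (hWodd : Odd W) (hH : 2 ≤ H) :
    ¬ (kbGraph W H).Colorable 3 ∧ 4 ≤ (kbGraph W H).chromaticNumber := by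
  have hnc : ¬ (kbGraph W H).Colorable 3 := by
    rintro ⟨C⟩
    have fin3 : ∀ a b : Fin 3, ((a.val : ZMod 3)) = ((b.val : ZMod 3)) → a = b := by decide
    have key : ∀ x y : Fin (W+1) × Fin (H+1), (gridGraph W H).Adj x y →
        ((C ⟦x⟧).val : ZMod 3) ≠ ((C ⟦y⟧).val : ZMod 3) := by
      intro x y h hcc
      have hne : (⟦x⟧ : Quotient (kbSetoid W H)) ≠ ⟦y⟧ := by
        intro he
        exact kbNF_adj_ne W H (by omega) (by omega) h
          (kbNF_eqvGen W H (by omega) (Quotient.exact he))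
      exact C.valid (show (kbGraph W H).Adj ⟦x⟧ ⟦y⟧ from ⟨hne, x, y, rfl, rfl, h⟩) (fin3 _ _ hcc)
    set v : ℕ → ℕ → Fin (W+1) × Fin (H+1) := fun i j =>
      (⟨i % (W+1), Nat.mod_lt _ (by omega)⟩, ⟨j % (H+1), Nat.mod_lt _ (by omega)⟩) with hv
    set col : ℕ → ℕ → ZMod 3 := fun i j => ((C ⟦v i j⟧).val : ZMod 3) with hcol
    have colH : ∀ i j, i < W → j ≤ H → col i j ≠ col (i+1) j := by
      intro i j hi hj
      apply key
      show ((((v i j).1.val : ℤ) - ((v (i+1) j).1.val : ℤ)).natAbs +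
        (((v i j).2.val : ℤ) - ((v (i+1) j).2.val : ℤ)).natAbs = 1)
      simp only [hv]
      rw [Nat.mod_eq_of_lt (show i < W+1 by omega), Nat.mod_eq_of_lt (show i+1 < W+1 by omega)]
      omega
    have colV : ∀ i j, i ≤ W → j < H → col i j ≠ col i (j+1) := by
      intro i j hi hj
      apply key
      show ((((v i j).1.val : ℤ) - ((v i (j+1)).1.val : ℤ)).natAbs +
        (((v i j).2.val : ℤ) - ((v i (j+1)).2.val : ℤ)).natAbs = 1)
      simp only [hv]
      rw [Nat.mod_eq_of_lt (show j < H+1 by omega), Nat.mod_eq_of_lt (show j+1 < H+1 by omega)]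
      omega
    have colWrap : ∀ j, j ≤ H → col 0 j = col W j := by
      intro j hj
      have : (⟦v 0 j⟧ : Quotient (kbSetoid W H)) = ⟦v W j⟧ := by
        apply Quotient.sound
        apply Relation.EqvGen.rel
        right
        refine ⟨?_, ?_, ?_⟩ <;> simp only [hv] <;>
          simp [Nat.mod_eq_of_lt, Nat.mod_self, Nat.lt_succ_self] <;> omega
      simp only [hcol, this]
    have colFlip : ∀ i, i ≤ W → col i 0 = col (W-i) H := by
      intro i hi
      have : (⟦v i 0⟧ : Quotient (kbSetoid W H)) = ⟦v (W-i) H⟧ := by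
        apply Quotient.sound
        apply Relation.EqvGen.rel
        left
        refine ⟨?_, ?_, ?_⟩ <;> simp only [hv] <;>
          rw [Nat.mod_eq_of_lt (by omega)] <;> try rw [Nat.mod_eq_of_lt (by omega)]
      simp only [hcol, this]
    -- row sums
    set S : ℕ → ℤ := fun j => ∑ i ∈ Finset.range W, kbF (col i j) (col (i+1) j) with hS
    -- each row sum is 0 mod 3
    have Smod3 : ∀ j, j ≤ H → ((S j : ℤ) : ZMod 3) = 0 := by
      intro j hj
      have : ((S j : ℤ) : ZMod 3) = ∑ i ∈ Finset.range W, (col (i+1) j - col i j) := by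
        rw [hS]
        push_cast
        apply Finset.sum_congr rfl
        intro i hi
        simp only [Finset.mem_range] at hi
        exact kbF_cast _ _ (colH i j hi hj)
      rw [this, Finset.sum_range_sub (fun i => col i j), ← colWrap j hj, sub_self]
    -- each row sum is odd
    have Smod2 : ∀ j, ((S j : ℤ) : ZMod 2) = 1 := by
      intro j
      have : ((S j : ℤ) : ZMod 2) = ∑ i ∈ Finset.range W, (1 : ZMod 2) := by
        rw [hS]; push_cast
        apply Finset.sum_congr rfl
        intro i _
        rcases kbF_pm (col i j) (col (i+1) j) with h | h <;> rw [h] <;> decide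
      rw [this, Finset.sum_const, Finset.card_range, nsmul_eq_mul, mul_one]
      have hw2 : W % 2 = 1 := Nat.odd_iff.mp hWodd
      rw [← ZMod.natCast_mod, hw2, Nat.cast_one]
    -- consecutive row sums are equal
    have Sstep : ∀ j, j < H → S j = S (j+1) := by
      intro j hj
      have face : ∀ i, i < W →
          kbF (col i j) (col (i+1) j) - kbF (col i (j+1)) (col (i+1) (j+1)) =
          kbF (col i j) (col i (j+1)) - kbF (col (i+1) j) (col (i+1) (j+1)) := by
        intro i hi
        have h1 := kbF_cast _ _ (colH i j hi (by omega))
        have h2 := kbF_cast _ _ (colH i (j+1) hi (by omega))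
        have h3 := kbF_cast _ _ (colV i j (by omega) hj)
        have h4 := kbF_cast _ _ (colV (i+1) j (by omega) hj)
        have hdvd : (3 : ℤ) ∣ (kbF (col i j) (col (i+1) j) -
            kbF (col i (j+1)) (col (i+1) (j+1)) - kbF (col i j) (col i (j+1)) +
            kbF (col (i+1) j) (col (i+1) (j+1))) := by
          have : (((kbF (col i j) (col (i+1) j) -
              kbF (col i (j+1)) (col (i+1) (j+1)) - kbF (col i j) (col i (j+1)) +
              kbF (col (i+1) j) (col (i+1) (j+1))) : ℤ) : ZMod 3) = 0 := by
            push_cast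
            rw [h1, h2, h3, h4]
            ring
          exact (ZMod.intCast_zmod_eq_zero_iff_dvd _ 3).mp this
        rcases kbF_pm (col i j) (col (i+1) j) with a1 | a1 <;>
        rcases kbF_pm (col i (j+1)) (col (i+1) (j+1)) with a2 | a2 <;>
        rcases kbF_pm (col i j) (col i (j+1)) with a3 | a3 <;>
        rcases kbF_pm (col (i+1) j) (col (i+1) (j+1)) with a4 | a4 <;>
        omega
      have : S j - S (j+1) = ∑ i ∈ Finset.range W,
          (kbF (col i j) (col i (j+1)) - kbF (col (i+1) j) (col (i+1) (j+1))) := by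
        rw [hS, ← Finset.sum_sub_distrib]
        apply Finset.sum_congr rfl
        intro i hi
        simp only [Finset.mem_range] at hi
        exact face i hi
      rw [Finset.sum_range_sub' (fun i => kbF (col i j) (col i (j+1)))] at this
      rw [colWrap j (by omega), colWrap (j+1) (by omega)] at this
      omega
    have SH : S 0 = S H := by
      have : ∀ j, j ≤ H → S 0 = S j := by
        intro j
        induction j with
        | zero => intro _; rfl
        | succ k ih => intro hk; rw [ih (by omega)]; exact Sstep k (by omega)
      exact this H le_rfl
    -- reflection: S H = - S 0
    have Srefl : S H = - S 0 := by
      have hterm : ∀ i, i < W → kbF (col i H) (col (i+1) H) =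
          - kbF (col (W-1-i) 0) (col (W-1-i+1) 0) := by
        intro i hi
        have e1 : col i H = col (W-i) 0 := by
          rw [colFlip (W-i) (by omega)]
          congr 1
          omega
        have e2 : col (i+1) H = col (W-(i+1)) 0 := by
          rw [colFlip (W-(i+1)) (by omega)]
          congr 1
          omega
        have e3 : W - 1 - i = W - (i+1) := by omega
        have e5 : W - (i+1) + 1 = W - i := by omega
        have hne : col (W-(i+1)) 0 ≠ col (W-(i+1)+1) 0 := colH _ 0 (by omega) (by omega)
        rw [e1, e2, e3, ← e5]
        exact kbF_neg _ _ hne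
      calc S H = ∑ i ∈ Finset.range W, -kbF (col (W-1-i) 0) (col (W-1-i+1) 0) := by
            rw [hS]
            exact Finset.sum_congr rfl (fun i hi => hterm i (Finset.mem_range.mp hi))
        _ = -∑ i ∈ Finset.range W, kbF (col (W-1-i) 0) (col ((W-1-i)+1) 0) := by
            rw [Finset.sum_neg_distrib]
        _ = -∑ i ∈ Finset.range W, kbF (col i 0) (col (i+1) 0) := by
            rw [Finset.sum_range_reflect (fun i => kbF (col i 0) (col (i+1) 0)) W]
        _ = - S 0 := by rw [hS]
    have hz : S 0 = 0 := by omega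
    have h2 := Smod2 0
    rw [hz] at h2
    norm_num at h2
  refine ⟨hnc, ?_⟩
  have hle : ¬ (kbGraph W H).chromaticNumber ≤ (3 : ℕ) := fun h =>
    hnc (SimpleGraph.chromaticNumber_le_iff_colorable.mp h)
  have hlt : ((3 : ℕ) : ℕ∞) < (kbGraph W H).chromaticNumber := lt_of_not_ge hle
  have h4 := (ENat.add_one_le_iff (by simp)).mpr hlt
  calc (4 : ℕ∞) = ((3 : ℕ) : ℕ∞) + 1 := by norm_num
    _ ≤ (kbGraph W H).chromaticNumber := h4
end

section
/- Let k ≥ 2 and N ≥ 1 and let {F_x}_{x ∈ [k]^N} be events (not necessarily disjoint) in a probability space with P(⋃_{x ∈ [k]^N} F_x) = 1. For x ∈ [k]^N let I_x = {y ∈ [k]^N : ∃ i ∈ [N], y_i = x_i}. Then there exists x* ∈ [k]^N with P(⋃_{y ∈ I_{x*}} F_y) ≥ 1 - (1 - 1/k)^N. -/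
/-!
Disjointify the `F x` into measurable `E x ⊆ F x` with the same union; the weights `μ (E x)` then
sum to `1`, and the union over `I_x` has measure at least the weight of `I_x`. For each `y`, exactly
`(k - 1) ^ N` tuples `x` have `y ∉ I_x`, so the weight outside `I_x` averages to
`(k - 1) ^ N / k ^ N = (1 - 1 / k) ^ N` over the `k ^ N` choices of `x`, and some `x` is at most
average.
-/

open MeasureTheory Finset Function
open scoped ENNReal

section Disjointify

variable {Ω ι : Type*} [MeasurableSpace Ω]

theorem exists_pairwise_disjoint_measurableSet_subset_iUnion_eq [Finite ι] {F : ι → Set Ω}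
    (hF : ∀ i, MeasurableSet (F i)) :
    ∃ E : ι → Set Ω, (∀ i, MeasurableSet (E i)) ∧ (∀ i, E i ⊆ F i) ∧
      Pairwise (Disjoint on E) ∧ ⋃ i, E i = ⋃ i, F i := by
  obtain ⟨n, ⟨e⟩⟩ := Finite.exists_equiv_fin ι
  refine ⟨disjointed (F ∘ e.symm) ∘ e,
    fun i ↦ disjointedRec (fun _ j ht ↦ ht.diff (hF (e.symm j))) (hF _), fun i ↦ ?_,
    fun i j hij ↦ disjoint_disjointed _ (e.injective.ne hij), ?_⟩
  · simpa using disjointed_subset (F ∘ e.symm) (e i)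
  · rw [comp_def, e.surjective.iUnion_comp (disjointed (F ∘ e.symm)), iUnion_disjointed]
    exact e.symm.surjective.iUnion_comp F

theorem exists_sum_eq_measure_iUnion_sum_le_measure_biUnion [Fintype ι] (μ : Measure Ω)
    {F : ι → Set Ω} (hF : ∀ i, MeasurableSet (F i)) :
    ∃ w : ι → ℝ≥0∞, ∑ i, w i = μ (⋃ i, F i) ∧
      ∀ s : Finset ι, ∑ i ∈ s, w i ≤ μ (⋃ i ∈ s, F i) := by
  obtain ⟨E, hEm, hEF, hEd, hEU⟩ := exists_pairwise_disjoint_measurableSet_subset_iUnion_eq hF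
  refine ⟨fun i ↦ μ (E i), ?_, fun s ↦ ?_⟩
  · rw [← hEU, measure_iUnion hEd hEm, tsum_fintype]
  · rw [← measure_biUnion_finset (fun i _ j _ hij ↦ hEd hij) (fun i _ ↦ hEm i)]
    exact measure_mono (Set.biUnion_mono subset_rfl fun i _ ↦ hEF i)

end Disjointify

theorem ENNReal.natCast_mul_one_sub_one_div (k : ℕ) :
    (k : ℝ≥0∞) * (1 - 1 / k) = (k - 1 : ℕ) := by
  rcases eq_or_ne k 0 with rfl | hk
  · simp
  rw [ENNReal.mul_sub fun _ _ ↦ ENNReal.natCast_ne_top k, mul_one,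
    ENNReal.mul_div_cancel (by exact_mod_cast hk) (ENNReal.natCast_ne_top k), ENNReal.natCast_sub,
    Nat.cast_one]

section Agreement

variable {ι α : Type*} [Fintype ι] [DecidableEq ι] [Fintype α] [DecidableEq α]

theorem card_filter_not_exists_eq (y : ι → α) :
    #{x : ι → α | ¬∃ i, y i = x i} = (Fintype.card α - 1) ^ Fintype.card ι := by
  have : ({x | ¬∃ i, y i = x i} : Finset (ι → α)) = Fintype.piFinset fun i ↦ {y i}ᶜ := by
    ext x
    simp [eq_comm]
  simp only [this, Fintype.card_piFinset, card_compl, card_singleton, prod_const, card_univ]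

theorem sum_sum_filter_not_exists_eq {M : Type*} [AddCommMonoid M] (p : (ι → α) → M) :
    ∑ x : ι → α, ∑ y with ¬∃ i, y i = x i, p y =
      (Fintype.card α - 1) ^ Fintype.card ι • ∑ y, p y := by
  simp_rw [sum_filter]
  rw [sum_comm, smul_sum]
  refine sum_congr rfl fun y _ ↦ ?_
  rw [← sum_filter, sum_const, card_filter_not_exists_eq]

theorem exists_sum_filter_exists_eq_ge {p : (ι → α) → ℝ≥0∞} (hp : ∑ y, p y = 1) :
    ∃ x : ι → α, 1 - (1 - 1 / (Fintype.card α : ℝ≥0∞)) ^ Fintype.card ι ≤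
      ∑ y with ∃ i, y i = x i, p y := by
  set c := (1 - 1 / (Fintype.card α : ℝ≥0∞)) ^ Fintype.card ι
  have hne : (univ : Finset (ι → α)).Nonempty :=
    nonempty_of_sum_ne_zero (hp ▸ one_ne_zero)
  obtain ⟨x, -, hx⟩ :
      ∃ x : ι → α, x ∈ univ ∧ ∑ y with ¬∃ i, y i = x i, p y ≤ c := by
    refine ENNReal.exists_le_of_sum_le hne ?_
    rw [sum_sum_filter_not_exists_eq, hp, sum_const, card_univ, Fintype.card_pi, prod_const,
      card_univ, nsmul_eq_mul, nsmul_eq_mul, mul_one, Nat.cast_pow, Nat.cast_pow, ← mul_pow,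
      ENNReal.natCast_mul_one_sub_one_div]
  have hsplit := sum_filter_add_sum_filter_not univ (fun y ↦ ∃ i, y i = x i) p
  rw [hp] at hsplit
  refine ⟨x, ?_⟩
  calc 1 - c ≤ 1 - ∑ y with ¬∃ i, y i = x i, p y := tsub_le_tsub_left hx 1
    _ ≤ ∑ y with ∃ i, y i = x i, p y := tsub_le_iff_right.2 hsplit.ge

end Agreement

theorem exists_agreeing_union_prob_ge_general {Ω : Type} [MeasurableSpace Ω]
    (μ : Measure Ω) (k N : ℕ)
    (F : (Fin N → Fin k) → Set Ω) (hF : ∀ x, MeasurableSet (F x))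
    (h : μ (⋃ x : Fin N → Fin k, F x) = 1) :
    ∃ x : Fin N → Fin k,
      1 - (1 - 1 / (k : ENNReal)) ^ N ≤
        μ (⋃ y ∈ {y : Fin N → Fin k | ∃ i, y i = x i}, F y) := by
  obtain ⟨w, hw, hw_le⟩ := exists_sum_eq_measure_iUnion_sum_le_measure_biUnion μ hF
  obtain ⟨x, hx⟩ := exists_sum_filter_exists_eq_ge (hw.trans h)
  rw [Fintype.card_fin, Fintype.card_fin] at hx
  refine ⟨x, hx.trans ((hw_le _).trans_eq ?_)⟩
  simp only [mem_filter, mem_univ, true_and, Set.mem_ofPred_eq]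

/-- Let `{F_x}_{x ∈ [k]^N}` be events (not necessarily disjoint) with
`P(⋃_x F_x) = 1`. Then there is `x*` with `P(⋃_{y ∈ I_{x*}} F_y) ≥ 1 - (1 - 1/k)^N`, where
`I_x` is the set of tuples agreeing with `x` in at least one coordinate. -/
theorem exists_agreeing_union_prob_ge {Ω : Type} [MeasurableSpace Ω]
    (μ : Measure Ω) [IsProbabilityMeasure μ] (k N : ℕ) (hk : 2 ≤ k) (hN : 1 ≤ N)
    (F : (Fin N → Fin k) → Set Ω) (hF : ∀ x, MeasurableSet (F x))
    (h : μ (⋃ x : Fin N → Fin k, F x) = 1) :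
    ∃ x : Fin N → Fin k,
      1 - (1 - 1 / (k : ENNReal)) ^ N ≤
        μ (⋃ y ∈ {y : Fin N → Fin k | ∃ i, y i = x i}, F y) :=
  exists_agreeing_union_prob_ge_general μ k N F hF h
end
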